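/- arXiv:2408.02991 — 2 statements merged into one kernel-verified Lean document; each statement's English description precedes it below -/
import Mathlib

section
/- Let G be a group acting on a topological space X by homeomorphisms, let S be a topological space, and let f : X → S be a continuous map which is constant on G-orbits and is a quotient map (i.e., surjective and S carries the quotient topology). Assume that for every s ∈ S the fiber f⁻¹(s) (which is G-stable) is G-connected, i.e., the orbit space f⁻¹(s)/G with the quotient topology is a connected (in particular nonempty) topological space. Then the orbit space X/G is connected if and only if S is connected. -/
/-- The orbit equivalence relation of a group `G` acting on a set `X`, restricted to a
(`G`-stable) subset `A ⊆ X`: two points of `A` are equivalent if some element of `G`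
moves one to the other (inside `X`). -/
def orbitSetoidOn (G : Type*) [Group G] {X : Type*} [MulAction G X] (A : Set X) :
    Setoid A where
  r x y := ∃ g : G, g • (x : X) = (y : X)
  iseqv := by
    refine ⟨fun x => ⟨1, one_smul G (x : X)⟩, ?_, ?_⟩
    · rintro x y ⟨g, h⟩
      exact ⟨g⁻¹, by rw [← h, inv_smul_smul]⟩
    · rintro x y z ⟨g, h⟩ ⟨g', h'⟩
      exact ⟨g' * g, by rw [mul_smul, h, h']⟩

/-- **Lemma 2.1 of the paper.** Let `G` act on a topological space `X` by homeomorphisms,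
and let `f : X → S` be a quotient map which is constant on `G`-orbits. If every fiber
`f ⁻¹' {s}` is `G`-connected (its orbit space is a connected topological space), then the
orbit space `X/G` is connected if and only if `S` is connected. -/
theorem gConnected_iff_connected_of_quotientMap
    {G X S : Type*} [Group G] [TopologicalSpace X] [TopologicalSpace S]
    [MulAction G X] [ContinuousConstSMul G X]
    (f : X → S) (horb : ∀ (g : G) (x : X), f (g • x) = f x)
    (hquot : Topology.IsQuotientMap f)
    (hfib : ∀ s : S, ConnectedSpace (Quotient (orbitSetoidOn G (f ⁻¹' {s})))) :
    ConnectedSpace (Quotient (MulAction.orbitRel G X)) ↔ ConnectedSpace S := by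
  -- the induced map F : X/G → S
  set F : Quotient (MulAction.orbitRel G X) → S :=
    Quotient.lift f (by
      intro a b hab
      obtain ⟨g, hg⟩ := hab
      simp only [← hg, horb]) with hF
  have hFmk : ∀ x : X, F ⟦x⟧ = f x := fun x => rfl
  have hFcont : Continuous F := hquot.continuous.quotient_lift _
  have hFquot : Topology.IsQuotientMap F :=
    Topology.IsQuotientMap.of_comp continuous_quotient_mk' hFcont hquot
  -- each fiber of F is connected
  have hfibF : ∀ s : S, IsConnected (F ⁻¹' {s}) := by
    intro s
    have := hfib s
    set φ : Quotient (orbitSetoidOn G (f ⁻¹' {s})) → Quotient (MulAction.orbitRel G X) :=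
      Quotient.lift (fun a => (⟦(a : X)⟧ : Quotient (MulAction.orbitRel G X))) (by
        rintro a b ⟨g, hg⟩
        exact Quotient.sound ⟨g⁻¹, by simp [← hg]⟩) with hφ
    have hφcont : Continuous φ :=
      Continuous.quotient_lift (continuous_quotient_mk'.comp continuous_subtype_val) _
    have hrange : Set.range φ = F ⁻¹' {s} := by
      ext q
      induction q using Quotient.inductionOn with
      | h x =>
        simp only [Set.mem_range, Set.mem_preimage, Set.mem_singleton_iff, hFmk]
        constructor
        · rintro ⟨p, hp⟩
          induction p using Quotient.inductionOn with
          | h a =>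
            obtain ⟨g, hg⟩ := Quotient.exact hp.symm
            rw [← hg, horb]
            exact a.2
        · intro hx
          exact ⟨⟦⟨x, hx⟩⟧, rfl⟩
    rw [← hrange]
    exact isConnected_range hφcont
  constructor
  · intro h
    exact hFquot.surjective.connectedSpace hFcont
  · intro h
    obtain ⟨s⟩ := (inferInstance : Nonempty S)
    obtain ⟨x, hx⟩ := hquot.surjective s
    have huniv : (Set.univ : Set (Quotient (MulAction.orbitRel G X))) =
        connectedComponent (⟦x⟧ : Quotient (MulAction.orbitRel G X)) := by
      rw [← hFquot.preimage_connectedComponent hfibF,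
        PreconnectedSpace.connectedComponent_eq_univ (F ⟦x⟧), Set.preimage_univ]
    have : IsConnected (Set.univ : Set (Quotient (MulAction.orbitRel G X))) := by
      rw [huniv]; exact isConnected_connectedComponent
    have hne : Nonempty (Quotient (MulAction.orbitRel G X)) := ⟨Quotient.mk _ x⟩
    exact { toNonempty := hne, isPreconnected_univ := this.isPreconnected }
end

section
/- Let p be a prime and let X be a scheme over 𝔽_p. Then the absolute Frobenius F_X : X → X is a universal homeomorphism: for every scheme T and every morphism g : T → X, the base change of F_X along g, i.e., the second projection pr : T ×_{g,X,F_X} X → T, induces a homeomorphism on underlying topological spaces. In Mathlib terms, F_X satisfies (MorphismProperty.topologically IsHomeomorph).universally. -/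
/-- The `p`-th power map as a ring homomorphism, on a commutative ring in which `p = 0`
(`p` a prime). -/
def pthPowerHom {p : ℕ} (hp : p.Prime) (R : Type*) [CommRing R] (h : (p : R) = 0) :
    R →+* R where
  toFun x := x ^ p
  map_one' := one_pow p
  map_mul' x y := mul_pow x y p
  map_zero' := zero_pow hp.ne_zero
  map_add' x y := by
    show (x + y) ^ p = x ^ p + y ^ p
    obtain ⟨r, hr⟩ := exists_add_pow_prime_eq hp x y
    rw [hr, h, zero_mul, zero_mul, zero_mul, add_zero]

open AlgebraicGeometry CategoryTheory TopologicalSpace Opposite Limits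

/-- The absolute Frobenius morphism of a scheme over `𝔽_p`: it is the identity on the
underlying topological space and raises sections of the structure sheaf to the `p`-th
power. -/
noncomputable def absFrob (p : ℕ) (hp : p.Prime) (X : Scheme)
    (hX : ∀ U : X.Opens, (p : Γ(X, U)) = 0) : X ⟶ X :=
  Scheme.Hom.mk
    { base := 𝟙 X.toPresheafedSpace.carrier
      c :=
        { app := fun U => CommRingCat.ofHom (pthPowerHom hp _ (hX U.unop))
          naturality := by
            intro U V f
            ext x
            show pthPowerHom hp _ (hX V.unop) (X.presheaf.map f x)
              = X.presheaf.map f (pthPowerHom hp _ (hX U.unop) x)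
            show (X.presheaf.map f x) ^ p = X.presheaf.map f (x ^ p)
            rw [map_pow] }
      prop := by
        intro x
        dsimp only
        refine ⟨fun a ha => ?_⟩
        obtain ⟨U, hxU, s, rfl⟩ := TopCat.Presheaf.exists_germ_eq X.presheaf a
        erw [PresheafedSpace.stalkMap_germ_apply] at ha
        dsimp only at ha
        replace ha : IsUnit ((X.presheaf.germ U x hxU) (s ^ p)) := ha
        rw [map_pow] at ha
        exact (isUnit_pow_iff hp.ne_zero).mp ha }

/-! Frobenius commutes with every morphism of `𝔽_p`-schemes, so in a pullback square of `F_X`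
along `g : T ⟶ X` the pair `(F_T, g)` lifts to `w : T ⟶ T ×_X X`. Both composites of `w` with the
projection to `T` are absolute Frobenii, by the universal property, hence are the identity on
points; so the projection is a homeomorphism with inverse `w`. -/

lemma natCast_eq_zero_of_hom {n : ℕ} {A B : Scheme} (u : A ⟶ B)
    (hB : ∀ U : B.Opens, (n : Γ(B, U)) = 0) (V : A.Opens) : (n : Γ(A, V)) = 0 := by
  have htop : (n : Γ(A, ⊤)) = 0 := by
    simpa using congrArg u.appTop (hB ⊤)
  simpa using congrArg (A.presheaf.map (homOfLE le_top).op) htop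

@[simp]
lemma absFrob_base_apply (p : ℕ) (hp : p.Prime) (X : Scheme)
    (hX : ∀ U : X.Opens, (p : Γ(X, U)) = 0) (x : X) : (absFrob p hp X hX).base x = x :=
  rfl

lemma absFrob_naturality {p : ℕ} (hp : p.Prime) {A B : Scheme} (u : A ⟶ B)
    (hA : ∀ U : A.Opens, (p : Γ(A, U)) = 0) (hB : ∀ U : B.Opens, (p : Γ(B, U)) = 0) :
    u ≫ absFrob p hp B hB = absFrob p hp A hA ≫ u := by
  refine Scheme.Hom.ext rfl fun U => ?_
  simp only [eqToHom_op, eqToHom_map]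
  ext x
  show u.app _ (x ^ p) = u.app U x ^ p
  rw [map_pow]

lemma exists_comp_eq_absFrob_of_isPullback {p : ℕ} (hp : p.Prime) {X X' Y' : Scheme}
    {hX : ∀ U : X.Opens, (p : Γ(X, U)) = 0} {f' : X' ⟶ Y'} {i₁ : X' ⟶ X} {i₂ : Y' ⟶ X}
    (H : IsPullback f' i₁ i₂ (absFrob p hp X hX))
    (hX' : ∀ U : X'.Opens, (p : Γ(X', U)) = 0) (hY' : ∀ U : Y'.Opens, (p : Γ(Y', U)) = 0) :
    ∃ w : Y' ⟶ X', f' ≫ w = absFrob p hp X' hX' ∧ w ≫ f' = absFrob p hp Y' hY' := by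
  let w := H.lift (absFrob p hp Y' hY') i₂ (absFrob_naturality hp i₂ hY' hX).symm
  refine ⟨w, H.hom_ext ?_ ?_, H.lift_fst _ _ _⟩
  · rw [Category.assoc, H.lift_fst, absFrob_naturality hp f' hX' hY']
  · rw [Category.assoc, H.lift_snd, H.w, absFrob_naturality hp i₁ hX' hX]

/-- The scheme case of Lemma 3.1 of the paper: the absolute Frobenius of a scheme over
`𝔽_p` is a universal homeomorphism, i.e. every base change of it induces a homeomorphism
on underlying topological spaces. -/
theorem absFrob_universal_homeomorphism (p : ℕ) (hp : p.Prime)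
    (X : Scheme) (hX : ∀ U : X.Opens, (p : Γ(X, U)) = 0) :
    (AlgebraicGeometry.topologically @IsHomeomorph).universally (absFrob p hp X hX) := by
  intro X' Y' i₁ i₂ f' H
  have hX' := natCast_eq_zero_of_hom i₁ hX
  have hY' := natCast_eq_zero_of_hom i₂ hX
  obtain ⟨w, hf'w, hwf'⟩ := exists_comp_eq_absFrob_of_isPullback hp H hX' hY'
  refine isHomeomorph_iff_exists_inverse.mpr ⟨f'.continuous, w.base, fun x => ?_, fun y => ?_,
    w.continuous⟩
  · simpa using congrArg (fun m => m.base x) hf'w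
  · simpa using congrArg (fun m => m.base y) hwf'
end
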